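/- Let X and Y be separated locally convex topological vector spaces over the reals, let φ : X × Y → (−∞,∞] be a convex function, let F : X ⇉ Y be a set-valued mapping with convex graph, define μ(x) := inf{φ(x,y) : y ∈ F(x)} (assumed finite-valued from below, μ(x) > −∞ for all x), and let M(x̄) := {y ∈ F(x̄) : μ(x̄) = φ(x̄,y)}. Assume that (i) φ is finite and continuous at some point of gph F, or (ii) X and Y are Banach spaces, φ is lower semicontinuous, gph F is closed, and ℝ⁺(dom φ − gph F) is a closed linear subspace of X × Y. Then for any x̄ ∈ X and ȳ ∈ M(x̄): ∂μ(x̄) = ⋃_{(x*,y*) ∈ ∂φ(x̄,ȳ)} [x* + D*F(x̄,ȳ)(y*)]. -/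

import Mathlib

open Pointwise

/-- Convexity of an `(-∞,∞]`-valued function, expressed via convexity of its epigraph. -/
def ConvexE {X : Type*} [AddCommGroup X] [Module ℝ X] (f : X → EReal) : Prop :=
  Convex ℝ {p : X × ℝ | f p.1 ≤ (p.2 : EReal)}

/-- Effective domain of an `(-∞,∞]`-valued function. -/
def domE {X : Type*} (f : X → EReal) : Set X := {x | f x ≠ ⊤}

/-- Subdifferential of `f` at `xb`. -/
def subdiffE {X : Type*} [AddCommGroup X] [Module ℝ X] [TopologicalSpace X]
    (f : X → EReal) (xb : X) : Set (X →L[ℝ] ℝ) :=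
  {p | ∀ x : X, ((p (x - xb) : ℝ) : EReal) ≤ f x - f xb}

/-- Subdifferential of a function on `X × Y`, expressed via pairs of functionals. -/
def subdiff2E {X Y : Type*} [AddCommGroup X] [Module ℝ X] [TopologicalSpace X]
    [AddCommGroup Y] [Module ℝ Y] [TopologicalSpace Y]
    (φ : X × Y → EReal) (zb : X × Y) : Set ((X →L[ℝ] ℝ) × (Y →L[ℝ] ℝ)) :=
  {pq | ∀ z : X × Y,
    ((pq.1 (z.1 - zb.1) + pq.2 (z.2 - zb.2) : ℝ) : EReal) ≤ φ z - φ zb}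

/-- Graph of a set-valued mapping. -/
def gphF {X Y : Type*} (F : X → Set Y) : Set (X × Y) := {p | p.2 ∈ F p.1}

/-- Coderivative of a convex-graph set-valued mapping `F` at `(xb, yb) ∈ gph F`. -/
def coderivF {X Y : Type*} [AddCommGroup X] [Module ℝ X] [TopologicalSpace X]
    [AddCommGroup Y] [Module ℝ Y] [TopologicalSpace Y]
    (F : X → Set Y) (xb : X) (yb : Y) (q : Y →L[ℝ] ℝ) : Set (X →L[ℝ] ℝ) :=
  {p | ∀ x : X, ∀ y ∈ F x, p (x - xb) - q (y - yb) ≤ 0}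

/-- `ℝ⁺(Ω) = {t • v : t > 0, v ∈ Ω}`. -/
def posSpan {X : Type*} [SMul ℝ X] (Ω : Set X) : Set X :=
  {x | ∃ t : ℝ, 0 < t ∧ ∃ v ∈ Ω, x = t • v}

/-- The (given) topology of `X` is generated by a complete norm compatible with the
linear structure, i.e. `X` is a Banach space. -/
def IsBanach (X : Type*) [AddCommGroup X] [Module ℝ X] [TopologicalSpace X] : Prop :=
  ∃ nm : X → ℝ,
    (∀ x, nm x = 0 ↔ x = 0) ∧
    (∀ x y, nm (x + y) ≤ nm x + nm y) ∧
    (∀ (c : ℝ) (x : X), nm (c • x) = |c| * nm x) ∧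
    (∀ s : Set X, IsOpen s ↔ ∀ x ∈ s, ∃ ε > 0, ∀ y, nm (y - x) < ε → y ∈ s) ∧
    (∀ u : ℕ → X, (∀ ε : ℝ, 0 < ε → ∃ N, ∀ m ≥ N, ∀ n ≥ N, nm (u m - u n) < ε) →
      ∃ x, Filter.Tendsto u Filter.atTop (nhds x))

/-!
For `ȳ ∈ M(x̄)`, `x*` is a subgradient of `μ` at `x̄` exactly when `(x*, 0)` is a subgradient of
`φ + δ_{gph F}` at `(x̄, ȳ)`, so the hard inclusion is the sum rule
`∂(φ + δ_Ω)(z̄) ⊆ ∂φ(z̄) + N(z̄; Ω)` for `Ω = gph F`. After tilting `φ` by the given subgradient,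
the sum rule asks for a continuous linear minorant of the convex function
`h u = inf_{w ∈ Ω} ψ (w + u)`, which satisfies `h 0 = 0`. By Hahn–Banach separation of its
epigraph from `(0, 0)`, such a minorant exists once `h` is bounded above near `0`: under (i)
because `h u ≤ ψ (z₀ + u)`; under (ii) on the closed subspace `L ⊇ dom h`, where the set of
differences `z - w` (`w ∈ Ω`, `ψ z ≤ 1`, both near `z̄`) is absorbing and cs-closed, hence a
neighbourhood of `0` by Baire's theorem, and the minorant on `L` extends by Hahn–Banach.
-/

open Filter Topology Set

theorem EReal.add_coe_le_coe_iff (a : EReal) (x t : ℝ) :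
    a + (x : EReal) ≤ (t : EReal) ↔ a ≤ ((t - x : ℝ) : EReal) := by
  rw [EReal.coe_sub,
    EReal.le_sub_iff_add_le (.inl (EReal.coe_ne_bot x)) (.inl (EReal.coe_ne_top x))]

theorem EReal.coe_le_add_coe_iff (a : EReal) (x t : ℝ) :
    (t : EReal) ≤ a + (x : EReal) ↔ ((t - x : ℝ) : EReal) ≤ a := by
  rw [EReal.coe_sub,
    EReal.sub_le_iff_le_add (.inl (EReal.coe_ne_bot x)) (.inl (EReal.coe_ne_top x))]

theorem EReal.exists_eq_coe_of_nonneg_sub_self {a : EReal} (h : 0 ≤ a - a) :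
    ∃ r : ℝ, a = r := by
  induction a using EReal.rec with
  | bot => simp at h
  | top => simp at h
  | coe r => exact ⟨r, rfl⟩

section ConvexE

variable {Z : Type*} [AddCommGroup Z] [Module ℝ Z] {f : Z → EReal}

theorem ConvexE.combo_le (hf : ConvexE f) {x y : Z} {s t a b : ℝ} (hx : f x ≤ s) (hy : f y ≤ t)
    (ha : 0 ≤ a) (hb : 0 ≤ b) (hab : a + b = 1) :
    f (a • x + b • y) ≤ ((a * s + b * t : ℝ) : EReal) :=
  hf (x := (x, s)) (y := (y, t)) hx hy ha hb hab

theorem ConvexE.convex_le (hf : ConvexE f) (c : ℝ) : Convex ℝ {z | f z ≤ c} := by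
  intro x hx y hy a b ha hb hab
  simpa [← add_mul, hab] using hf.combo_le hx hy ha hb hab

theorem ConvexE.comp_linearMap {W : Type*} [AddCommGroup W] [Module ℝ W] (hf : ConvexE f)
    (g : W →ₗ[ℝ] Z) : ConvexE (f ∘ g) :=
  hf.linear_preimage (g.prodMap LinearMap.id)

theorem ConvexE.add_affine (hf : ConvexE f) (ℓ : Z →ₗ[ℝ] ℝ) (c : ℝ) :
    ConvexE fun z => f z + ((c - ℓ z : ℝ) : EReal) := by
  rintro ⟨x, s⟩ hx ⟨y, t⟩ hy a b ha hb hab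
  simp only [mem_ofPred_eq, EReal.add_coe_le_coe_iff, Prod.smul_mk, Prod.mk_add_mk] at hx hy ⊢
  convert hf.combo_le hx hy ha hb hab using 2
  simp only [smul_eq_mul, map_add, map_smul]
  linear_combination c * hab

end ConvexE

section LinearMinorant

variable {Z : Type*} [AddCommGroup Z] [Module ℝ Z] [TopologicalSpace Z]
  [IsTopologicalAddGroup Z] [ContinuousSMul ℝ Z] {h : Z → EReal}

/-- Separate `(0, 0)` from the interior of the epigraph, which contains `(0, m + 1)`. -/
theorem ConvexE.exists_nonvertical_support (hh : ConvexE h) (h0 : h 0 = 0) {m : ℝ}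
    (hm : ∀ᶠ u in 𝓝 0, h u ≤ m) :
    ∃ f : Z × ℝ →L[ℝ] ℝ, f (0, 1) < 0 ∧ ∀ u (t : ℝ), h u ≤ t → f (u, t) ≤ 0 := by
  set epi := {p : Z × ℝ | h p.1 ≤ p.2}
  obtain ⟨U, hUm, hUo, hU0⟩ := mem_nhds_iff.1 hm
  have hm0 : (0 : ℝ) ≤ m := by
    have : h 0 ≤ m := hUm hU0
    exact_mod_cast h0 ▸ this
  have hint : ((0 : Z), m + 1) ∈ interior epi :=
    interior_maximal (fun p hp => (hUm hp.1).trans (EReal.coe_le_coe_iff.2 (le_of_lt hp.2)))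
      (hUo.prod isOpen_Ioi) ⟨hU0, lt_add_one m⟩
  have hnot : ((0 : Z), (0 : ℝ)) ∉ interior epi := by
    intro h00
    have : ∀ᶠ t : ℝ in 𝓝 0, ((0 : Z), t) ∈ epi :=
      (Continuous.prodMk_right (0 : Z)).continuousAt.preimage_mem_nhds
        (mem_interior_iff_mem_nhds.1 h00)
    obtain ⟨t, ht, hte⟩ := this.exists_lt
    have : h 0 ≤ t := hte
    rw [h0, ← EReal.coe_zero, EReal.coe_le_coe_iff] at this
    linarith
  obtain ⟨f, hf⟩ := geometric_hahn_banach_open_point hh.interior isOpen_interior hnot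
  have hf00 : f ((0 : Z), (0 : ℝ)) = 0 := f.map_zero
  have hepi : epi ⊆ closure (interior epi) := by
    rw [hh.closure_interior_eq_closure_of_nonempty_interior ⟨_, hint⟩]
    exact subset_closure
  refine ⟨f, ?_, fun u t hut => ?_⟩
  · have : f ((m + 1) • ((0 : Z), (1 : ℝ))) < 0 := by simpa [hf00] using hf _ hint
    rw [map_smul, smul_eq_mul] at this
    exact neg_of_mul_neg_right this (by linarith)
  · refine closure_lt_subset_le f.continuous continuous_const (closure_mono ?_ (hepi hut))
    exact fun q hq => hf00 ▸ hf q hq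

theorem ConvexE.exists_le_of_eventually_le (hh : ConvexE h) (h0 : h 0 = 0) {m : ℝ}
    (hm : ∀ᶠ u in 𝓝 0, h u ≤ m) : ∃ ζ : Z →L[ℝ] ℝ, ∀ u, (ζ u : EReal) ≤ h u := by
  obtain ⟨f, hs, hf⟩ := hh.exists_nonvertical_support h0 hm
  refine ⟨(-f (0, 1))⁻¹ • f.comp (ContinuousLinearMap.inl ℝ Z ℝ),
    fun u => EReal.le_of_forall_lt_iff_le.1 fun t ht => ?_⟩
  have hsplit : f (u, t) = f (u, 0) + t * f (0, 1) := by
    rw [← smul_eq_mul, ← map_smul, ← map_add, Prod.smul_mk, smul_zero, smul_eq_mul, mul_one,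
      Prod.mk_add_mk, add_zero, zero_add]
  have := hf u t ht.le
  rw [EReal.coe_le_coe_iff]
  simp only [FunLike.coe_smul, ContinuousLinearMap.coe_comp, Pi.smul_apply,
    Function.comp_apply, ContinuousLinearMap.inl_apply, smul_eq_mul]
  rw [inv_mul_le_iff₀ (by linarith)]
  nlinarith

end LinearMinorant

section InfTranslate

variable {Z : Type*} [AddCommGroup Z] {ψ : Z → EReal} {Ω : Set Z}

/-- The infimal convolution `ψ □ δ_{-Ω}` of `ψ` with the indicator function of `-Ω`. -/
noncomputable def infTranslate (ψ : Z → EReal) (Ω : Set Z) (u : Z) : EReal :=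
  ⨅ w ∈ Ω, ψ (w + u)

theorem infTranslate_le {w : Z} (hw : w ∈ Ω) (u : Z) : infTranslate ψ Ω u ≤ ψ (w + u) :=
  iInf₂_le w hw

theorem exists_lt_of_infTranslate_lt {u : Z} {c : EReal} (h : infTranslate ψ Ω u < c) :
    ∃ w ∈ Ω, ψ (w + u) < c := by
  simpa only [infTranslate, iInf_lt_iff, exists_prop] using h

theorem infTranslate_zero {zb : Z} (hzb : zb ∈ Ω) (hψzb : ψ zb = 0)
    (hψΩ : ∀ w ∈ Ω, 0 ≤ ψ w) : infTranslate ψ Ω 0 = 0 :=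
  le_antisymm (by simpa [hψzb] using infTranslate_le hzb (ψ := ψ) 0)
    (le_iInf₂ fun w hw => by simpa using hψΩ w hw)

theorem mem_sub_of_infTranslate_ne_top {u : Z} (h : infTranslate ψ Ω u ≠ ⊤) :
    u ∈ domE ψ - Ω := by
  obtain ⟨w, hw, hlt⟩ := exists_lt_of_infTranslate_lt h.lt_top
  exact ⟨w + u, hlt.ne, w, hw, add_sub_cancel_left w u⟩

theorem convexE_infTranslate [Module ℝ Z] (hψ : ConvexE ψ) (hΩ : Convex ℝ Ω) :
    ConvexE (infTranslate ψ Ω) := by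
  rintro ⟨u, s⟩ hu ⟨v, t⟩ hv a b ha hb hab
  refine EReal.le_of_forall_lt_iff_le.1 fun c hc => ?_
  have hε : 0 < c - (a * s + b * t) := by
    have : ((a * s + b * t : ℝ) : EReal) < c := by simpa using hc
    linarith [EReal.coe_lt_coe_iff.1 this]
  obtain ⟨w₁, hw₁, h₁⟩ := exists_lt_of_infTranslate_lt
    (hu.trans_lt (EReal.coe_lt_coe_iff.2 (lt_add_of_pos_right s hε)))
  obtain ⟨w₂, hw₂, h₂⟩ := exists_lt_of_infTranslate_lt
    (hv.trans_lt (EReal.coe_lt_coe_iff.2 (lt_add_of_pos_right t hε)))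
  calc infTranslate ψ Ω (a • u + b • v)
      ≤ ψ ((a • w₁ + b • w₂) + (a • u + b • v)) := infTranslate_le (hΩ hw₁ hw₂ ha hb hab) _
    _ = ψ (a • (w₁ + u) + b • (w₂ + v)) := by congr 1; module
    _ ≤ _ := hψ.combo_le h₁.le h₂.le ha hb hab
    _ = c := by congr 1; linear_combination (c - (a * s + b * t)) * hab

theorem le_and_nonneg_of_le_infTranslate [Module ℝ Z] [TopologicalSpace Z] {ζ : Z →L[ℝ] ℝ}
    (hζ : ∀ u, (ζ u : EReal) ≤ infTranslate ψ Ω u) {zb : Z} (hzb : zb ∈ Ω) (hψzb : ψ zb = 0) :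
    (∀ z, (ζ (z - zb) : EReal) ≤ ψ z) ∧ ∀ w ∈ Ω, 0 ≤ ζ (w - zb) := by
  refine ⟨fun z => (hζ _).trans (by simpa using infTranslate_le hzb (z - zb)), fun w hw => ?_⟩
  have : (ζ (zb - w) : EReal) ≤ (0 : ℝ) :=
    (hζ _).trans (by simpa [hψzb] using infTranslate_le (ψ := ψ) hw (zb - w))
  rw [← neg_sub, map_neg, neg_nonneg]
  exact_mod_cast this

end InfTranslate

section Tilt

variable {Z : Type*} [AddCommGroup Z] [Module ℝ Z] [TopologicalSpace Z] {f : Z → EReal}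
  {ℓ : Z →L[ℝ] ℝ} {zb : Z} {r : ℝ}

/-- `f - (r + ℓ (· - zb))`; for `r = f zb` this turns the subgradient `ℓ` of `f + δ_Ω` at `zb`
into `0`. -/
noncomputable def tilt (f : Z → EReal) (ℓ : Z →L[ℝ] ℝ) (zb : Z) (r : ℝ) (z : Z) : EReal :=
  f z + ((ℓ zb - r - ℓ z : ℝ) : EReal)

theorem coe_le_tilt_iff (t : ℝ) (z : Z) :
    (t : EReal) ≤ tilt f ℓ zb r z ↔ ((t + ℓ (z - zb) : ℝ) : EReal) ≤ f z - r := by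
  rw [tilt, EReal.coe_le_add_coe_iff,
    EReal.le_sub_iff_add_le (.inl (EReal.coe_ne_bot r)) (.inl (EReal.coe_ne_top r)),
    ← EReal.coe_add, map_sub]
  ring_nf

theorem tilt_self (hfzb : f zb = r) : tilt f ℓ zb r zb = 0 := by
  rw [tilt, hfzb, ← EReal.coe_add, sub_sub_cancel_left, add_neg_cancel, EReal.coe_zero]

theorem convexE_tilt (hf : ConvexE f) : ConvexE (tilt f ℓ zb r) :=
  hf.add_affine ℓ (ℓ zb - r)

theorem domE_tilt : domE (tilt f ℓ zb r) = domE f := by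
  ext z
  exact EReal.add_ne_top_iff_of_ne_bot_of_ne_top (EReal.coe_ne_bot _) (EReal.coe_ne_top _)

theorem LowerSemicontinuous.tilt (hf : LowerSemicontinuous f) :
    LowerSemicontinuous (tilt f ℓ zb r) :=
  hf.add' (continuous_coe_real_ereal.comp (continuous_const.sub ℓ.continuous)).lowerSemicontinuous
    fun _ => EReal.continuousAt_add (.inr (EReal.coe_ne_bot _)) (.inr (EReal.coe_ne_top _))

theorem exists_eventually_tilt_le {z₀ : Z} (hcont : ContinuousAt f z₀) (hfz₀ : f z₀ ≠ ⊤) :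
    ∃ m : ℝ, ∀ᶠ z in 𝓝 z₀, tilt f ℓ zb r z ≤ m := by
  obtain ⟨c, hc, -⟩ := EReal.exists_between_coe_real hfz₀.lt_top
  have hℓ : ContinuousAt (fun z => ℓ zb - r - ℓ z) z₀ :=
    (continuous_const.sub ℓ.continuous).continuousAt
  refine ⟨c + (ℓ zb - r - ℓ z₀ + 1), ?_⟩
  filter_upwards [hcont (Iio_mem_nhds hc), hℓ (Iio_mem_nhds (lt_add_one _))] with z h₁ h₂
  rw [EReal.coe_add]
  exact add_le_add (le_of_lt h₁) (EReal.coe_le_coe_iff.2 (le_of_lt h₂))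

variable {Ω : Set Z}

theorem infTranslate_tilt_zero (hzb : zb ∈ Ω) (hfzb : f zb = r)
    (hℓ : ∀ z ∈ Ω, (ℓ (z - zb) : EReal) ≤ f z - f zb) : infTranslate (tilt f ℓ zb r) Ω 0 = 0 :=
  infTranslate_zero hzb (tilt_self hfzb) fun w hw => by
    rw [← EReal.coe_zero, coe_le_tilt_iff, zero_add, ← hfzb]
    exact hℓ w hw

theorem exists_subgradient_normal_of_le_infTranslate (hzb : zb ∈ Ω) (hfzb : f zb = r)
    {ζ : Z →L[ℝ] ℝ} (hζ : ∀ u, (ζ u : EReal) ≤ infTranslate (tilt f ℓ zb r) Ω u) :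
    ∃ ζ : Z →L[ℝ] ℝ, (∀ z, (ζ (z - zb) : EReal) ≤ f z - f zb) ∧
      ∀ w ∈ Ω, ℓ (w - zb) ≤ ζ (w - zb) := by
  obtain ⟨hle, hnonneg⟩ := le_and_nonneg_of_le_infTranslate hζ hzb (tilt_self hfzb)
  refine ⟨ζ + ℓ, fun z => ?_, fun w hw => by simpa using hnonneg w hw⟩
  rw [hfzb, add_apply]
  exact (coe_le_tilt_iff _ z).1 (hle z)

end Tilt

section SumRule

variable {Z : Type*} [AddCommGroup Z] [Module ℝ Z] [TopologicalSpace Z]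
  [IsTopologicalAddGroup Z] [ContinuousSMul ℝ Z] {ψ : Z → EReal} {Ω : Set Z}

theorem exists_le_infTranslate_of_eventually_le (hψ : ConvexE ψ) (hΩ : Convex ℝ Ω)
    (h0 : infTranslate ψ Ω 0 = 0) {z₀ : Z} (hz₀ : z₀ ∈ Ω) {m : ℝ}
    (hm : ∀ᶠ z in 𝓝 z₀, ψ z ≤ m) : ∃ ζ : Z →L[ℝ] ℝ, ∀ u, (ζ u : EReal) ≤ infTranslate ψ Ω u :=
  (convexE_infTranslate hψ hΩ).exists_le_of_eventually_le h0 <|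
    (((continuous_const_add z₀).tendsto' 0 z₀ (add_zero z₀)).eventually hm).mono
      fun u hu => (infTranslate_le hz₀ u).trans hu

theorem exists_subgradient_normal_of_continuousAt {f : Z → EReal} (hf : ConvexE f)
    (hΩ : Convex ℝ Ω) {zb : Z} (hzb : zb ∈ Ω) {r : ℝ} (hfzb : f zb = r) {ℓ : Z →L[ℝ] ℝ}
    (hℓ : ∀ z ∈ Ω, (ℓ (z - zb) : EReal) ≤ f z - f zb) {z₀ : Z} (hz₀ : z₀ ∈ Ω)
    (hfz₀ : f z₀ ≠ ⊤) (hcont : ContinuousAt f z₀) :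
    ∃ ζ : Z →L[ℝ] ℝ, (∀ z, (ζ (z - zb) : EReal) ≤ f z - f zb) ∧
      ∀ w ∈ Ω, ℓ (w - zb) ≤ ζ (w - zb) := by
  obtain ⟨m, hm⟩ := exists_eventually_tilt_le (ℓ := ℓ) (zb := zb) (r := r) hcont hfz₀
  obtain ⟨ζ, hζ⟩ := exists_le_infTranslate_of_eventually_le (convexE_tilt hf) hΩ
    (infTranslate_tilt_zero hzb hfzb hℓ) hz₀ hm
  exact exists_subgradient_normal_of_le_infTranslate hzb hfzb hζ

end SumRule

/-- Jameson's *cs-closed* (convex-series closed) sets. -/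
def IsCSClosed {E : Type*} [AddCommGroup E] [Module ℝ E] [TopologicalSpace E] (A : Set E) :
    Prop :=
  ∀ ⦃c : ℕ → ℝ⦄ ⦃x : ℕ → E⦄ ⦃y : E⦄, (∀ n, 0 ≤ c n) → HasSum c 1 → (∀ n, x n ∈ A) →
    Tendsto (fun n => ∑ k ∈ Finset.range n, c k • x k) atTop (𝓝 y) → y ∈ A

section CSClosed

variable {E F : Type*}

theorem Convex.isCSClosed [AddCommGroup E] [Module ℝ E] [TopologicalSpace E]
    [IsTopologicalAddGroup E] [ContinuousSMul ℝ E] {A : Set E} (hA : Convex ℝ A)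
    (hc : IsClosed A) : IsCSClosed A := by
  intro c x y hc0 hc1 hx hy
  have hS := hc1.tendsto_sum_nat
  have hlim : Tendsto (fun n => (∑ k ∈ Finset.range n, c k)⁻¹ • ∑ k ∈ Finset.range n, c k • x k)
      atTop (𝓝 y) := by
    simpa using (hS.inv₀ one_ne_zero).smul hy
  refine hc.mem_of_tendsto hlim ?_
  filter_upwards [hS.eventually (lt_mem_nhds one_pos)] with n hn
  exact hA.centerMass_mem (fun k _ => hc0 k) hn fun k _ => hx k

theorem IsCSClosed.preimage [AddCommGroup E] [Module ℝ E] [TopologicalSpace E]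
    [AddCommGroup F] [Module ℝ F] [TopologicalSpace F] {A : Set F} (hA : IsCSClosed A)
    (T : E →L[ℝ] F) : IsCSClosed (T ⁻¹' A) := fun c x y hc0 hc1 hx hy =>
  hA hc0 hc1 hx <| by
    simpa [Function.comp_def, map_sum, map_smul] using (T.continuous.tendsto y).comp hy

variable [NormedAddCommGroup E] [NormedSpace ℝ E]

theorem IsCSClosed.image [CompleteSpace E] [NormedAddCommGroup F] [NormedSpace ℝ F]
    {K : Set E} (hK : IsCSClosed K) (hb : Bornology.IsBounded K) (T : E →L[ℝ] F) :
    IsCSClosed (T '' K) := by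
  intro c x y hc0 hc1 hx hy
  choose p hpK hpx using hx
  obtain ⟨R, hR⟩ := hb.exists_norm_le
  have hsum : Summable fun n => c n • p n :=
    .of_norm_bounded (hc1.summable.mul_right R) fun n => by
      rw [norm_smul, Real.norm_of_nonneg (hc0 n)]
      exact mul_le_mul_of_nonneg_left (hR _ (hpK n)) (hc0 n)
  have hP := hsum.hasSum.tendsto_sum_nat
  refine ⟨_, hK hc0 hc1 hpK hP, tendsto_nhds_unique ((T.continuous.tendsto _).comp hP) ?_⟩
  simpa [Function.comp_def, map_sum, map_smul, hpx] using hy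

/-- The series argument of the open mapping theorem: `y = ∑ 2⁻ᵏ⁻¹ • a (eₖ)`, where `a e ∈ A`
approximates `e` and the residues are `e₀ = 2 • y`, `eₖ₊₁ = 2 • (eₖ - a eₖ)`. -/
theorem IsCSClosed.mem_nhds_zero {A : Set E} (hA : IsCSClosed A) (hcl : closure A ∈ 𝓝 (0 : E)) :
    A ∈ 𝓝 (0 : E) := by
  obtain ⟨r, hr, hball⟩ := Metric.mem_nhds_iff.1 hcl
  have happrox : ∀ e ∈ Metric.ball (0 : E) r, ∃ a ∈ A, ‖e - a‖ < r / 2 := fun e he => by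
    obtain ⟨a, ha, hd⟩ := Metric.mem_closure_iff.1 (hball he) (r / 2) (half_pos hr)
    exact ⟨a, ha, by rwa [← dist_eq_norm]⟩
  choose! a haA hae using happrox
  refine Filter.mem_of_superset (Metric.ball_mem_nhds 0 (half_pos hr)) fun y hy => ?_
  rw [mem_ball_zero_iff] at hy
  set e : ℕ → E := fun n => (fun v => (2 : ℝ) • (v - a v))^[n] ((2 : ℝ) • y)
  have he_succ : ∀ n, e (n + 1) = (2 : ℝ) • (e n - a (e n)) := fun n =>
    Function.iterate_succ_apply' _ n _
  have he : ∀ n, e n ∈ Metric.ball (0 : E) r := by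
    intro n
    induction n with
    | zero =>
      simp only [e, Function.iterate_zero, id, mem_ball_zero_iff, norm_smul, Real.norm_ofNat]
      linarith
    | succ n ih =>
      rw [he_succ, mem_ball_zero_iff, norm_smul, Real.norm_ofNat]
      linarith [hae _ ih]
  set c : ℕ → ℝ := fun n => 1 / 2 / 2 ^ n
  have hpartial : ∀ n, ∑ k ∈ Finset.range n, c k • a (e k) = y - c n • e n := by
    intro n
    induction n with
    | zero => simp [c, e, smul_smul]
    | succ n ih =>
      rw [Finset.sum_range_succ, ih, he_succ, smul_smul]
      simp only [c, pow_succ]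
      module
  have hc : HasSum c 1 := hasSum_geometric_two' 1
  refine hA (fun n => by positivity) hc (fun n => haA _ (he n)) ?_
  simp_rw [hpartial]
  have hc0 : Tendsto (fun n => c n * r) atTop (𝓝 0) := by
    simpa using hc.summable.tendsto_atTop_zero.mul_const r
  have : Tendsto (fun n => c n • e n) atTop (𝓝 0) := squeeze_zero_norm (fun n => by
    rw [norm_smul, Real.norm_of_nonneg (by positivity)]
    exact mul_le_mul_of_nonneg_left (mem_ball_zero_iff.1 (he n)).le (by positivity)) hc0
  simpa using tendsto_const_nhds.sub this

end CSClosed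

theorem Convex.closure_mem_nhds_zero {E : Type*} [AddCommGroup E] [Module ℝ E]
    [TopologicalSpace E] [IsTopologicalAddGroup E] [ContinuousSMul ℝ E] [BaireSpace E]
    {A : Set E} (hA : Convex ℝ A) (h0 : (0 : E) ∈ A) (habs : ∀ u, ∃ t : ℝ, 0 < t ∧ t • u ∈ A) :
    closure A ∈ 𝓝 (0 : E) := by
  have hcover : ⋃ n : ℕ, ((n : ℝ) + 1) • closure A = univ := by
    refine eq_univ_of_forall fun u => mem_iUnion.2 ?_
    obtain ⟨t, ht, htu⟩ := habs u
    obtain ⟨n, hn⟩ := exists_nat_ge t⁻¹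
    refine ⟨n, (mem_smul_set_iff_inv_smul_mem₀ (by positivity) _ _).2 (subset_closure ?_)⟩
    rw [show ((n : ℝ) + 1)⁻¹ • u = (((n : ℝ) + 1)⁻¹ * t⁻¹) • (t • u) by
      rw [smul_smul, mul_assoc, inv_mul_cancel₀ ht.ne', mul_one]]
    refine hA.smul_mem_of_zero_mem h0 htu ⟨by positivity, ?_⟩
    rw [← mul_inv, inv_le_one₀ (by positivity)]
    nlinarith [mul_inv_cancel₀ ht.ne']
  obtain ⟨n, v, hv⟩ := nonempty_interior_of_iUnion_of_closed
    (fun n => isClosed_closure.smul_of_ne_zero (by positivity)) hcover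
  rw [interior_smul₀ (by positivity)] at hv
  obtain ⟨w, hw, -⟩ := hv
  obtain ⟨s, hs, hsw⟩ := habs (-w)
  have := hA.closure.combo_interior_self_mem_interior hw (subset_closure hsw)
    (a := s / (1 + s)) (b := 1 / (1 + s)) (by positivity) (by positivity) (by field_simp; ring)
  rw [smul_smul, smul_neg, ← sub_eq_add_neg, ← sub_smul, div_mul_eq_mul_div, one_mul, sub_self,
    zero_smul] at this
  exact mem_interior_iff_mem_nhds.1 this

theorem subset_posSpan {X : Type*} [AddCommGroup X] [Module ℝ X] (Ω : Set X) : Ω ⊆ posSpan Ω :=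
  fun v hv => ⟨1, one_pos, v, hv, (one_smul ℝ v).symm⟩

section AttouchBrezis

variable {E : Type*} [NormedAddCommGroup E] [NormedSpace ℝ E] {ψ : E → EReal} {Ω : Set E}
  {zb : E}

theorem exists_smul_eq_sub_of_mem_posSpan (hψ : ConvexE ψ) (hΩ : Convex ℝ Ω) (hzb : zb ∈ Ω)
    (hψzb : ψ zb ≤ 0) {u : E} (hu : u ∈ posSpan (domE ψ - Ω)) :
    ∃ t : ℝ, 0 < t ∧ ∃ w ∈ Ω ∩ Metric.closedBall zb 1,
      ∃ z ∈ {z | ψ z ≤ 1} ∩ Metric.closedBall zb 1, t • u = z - w := by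
  obtain ⟨s, hs, _, ⟨d, hd, w₀, hw₀, rfl⟩, rfl⟩ := hu
  have hsmall : ∀ a : ℝ, ∀ᶠ κ in 𝓝[>] (0 : ℝ), κ * a ≤ 1 := fun a => nhdsWithin_le_nhds <|
    ((continuous_mul_const a).tendsto' 0 0 (zero_mul a)).eventually (eventually_le_nhds one_pos)
  obtain ⟨κ, ⟨⟨⟨hw, hd'⟩, hψd⟩, hκ1⟩, hκ⟩ := ((((hsmall ‖w₀ - zb‖).and (hsmall ‖d - zb‖)).and
    (hsmall (ψ d).toReal)).and (hsmall 1)).and self_mem_nhdsWithin |>.exists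
  rw [mul_one] at hκ1
  have hball : ∀ v, κ • v + (1 - κ) • zb ∈ Metric.closedBall zb 1 ↔ κ * ‖v - zb‖ ≤ 1 := by
    intro v
    rw [mem_closedBall_iff_norm, show κ • v + (1 - κ) • zb - zb = κ • (v - zb) by module,
      norm_smul, Real.norm_of_nonneg hκ.le]
  refine ⟨κ / s, div_pos hκ hs, κ • w₀ + (1 - κ) • zb,
    ⟨hΩ hw₀ hzb hκ.le (by linarith) (by ring), (hball w₀).2 (by linarith)⟩,
    κ • d + (1 - κ) • zb, ⟨?_, (hball d).2 (by linarith)⟩, ?_⟩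
  · refine (hψ.combo_le (EReal.le_coe_toReal hd) hψzb hκ.le (by linarith) (by ring)).trans ?_
    exact_mod_cast (by linarith : κ * (ψ d).toReal + (1 - κ) * 0 ≤ 1)
  · rw [smul_smul, div_mul_cancel₀ _ hs.ne']
    module

/-- The differences `z - w` with `w ∈ Ω`, `ψ z ≤ 1` and `w, z` in the unit ball around `zb`
form a bounded, hence cs-closed, absorbing convex subset of the Banach space `L`; Baire's
theorem makes it a neighbourhood of `0`. -/
theorem eventually_exists_add_le_one [CompleteSpace E] (hψ : ConvexE ψ)
    (hlsc : LowerSemicontinuous ψ) (hΩ : Convex ℝ Ω) (hΩc : IsClosed Ω) (hzb : zb ∈ Ω)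
    (hψzb : ψ zb ≤ 0) {L : Submodule ℝ E} (hLc : IsClosed (L : Set E))
    (hL : posSpan (domE ψ - Ω) = L) : ∀ᶠ u : L in 𝓝 0, ∃ w ∈ Ω, ψ (w + u) ≤ 1 := by
  set K : Set (E × E) :=
    (Ω ∩ Metric.closedBall zb 1) ×ˢ ({z | ψ z ≤ 1} ∩ Metric.closedBall zb 1)
  set T : E × E →L[ℝ] E := ContinuousLinearMap.snd ℝ E E - ContinuousLinearMap.fst ℝ E E
  have hT : ∀ p : E × E, T p = p.2 - p.1 := fun _ => rfl
  set A : Set L := L.subtypeL ⁻¹' (T '' K)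
  have hKconv : Convex ℝ K :=
    (hΩ.inter (convex_closedBall _ _)).prod ((hψ.convex_le 1).inter (convex_closedBall _ _))
  have hKcl : IsClosed K :=
    (hΩc.inter Metric.isClosed_closedBall).prod
      ((hlsc.isClosed_preimage 1).inter Metric.isClosed_closedBall)
  have hKb : Bornology.IsBounded K :=
    (Metric.isBounded_closedBall.subset inter_subset_right).prod
      (Metric.isBounded_closedBall.subset inter_subset_right)
  have hA : IsCSClosed A := ((hKconv.isCSClosed hKcl).image hKb T).preimage L.subtypeL
  have hAconv : Convex ℝ A := (hKconv.linear_image T.toLinearMap).linear_preimage L.subtype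
  have hA0 : (0 : L) ∈ A := ⟨(zb, zb),
    ⟨⟨hzb, Metric.mem_closedBall_self zero_le_one⟩,
      ⟨hψzb.trans zero_le_one, Metric.mem_closedBall_self zero_le_one⟩⟩, by simp [hT]⟩
  have hAabs : ∀ u : L, ∃ t : ℝ, 0 < t ∧ t • u ∈ A := fun u => by
    obtain ⟨t, ht, w, hw, z, hz, htu⟩ :=
      exists_smul_eq_sub_of_mem_posSpan hψ hΩ hzb hψzb (by rw [hL]; exact u.2)
    exact ⟨t, ht, ⟨(w, z), ⟨hw, hz⟩, by simp [hT, ← htu]⟩⟩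
  have : CompleteSpace L := hLc.completeSpace_coe
  filter_upwards [hA.mem_nhds_zero (hAconv.closure_mem_nhds_zero hA0 hAabs)] with u hu
  obtain ⟨⟨w, z⟩, ⟨⟨hw, -⟩, hz, -⟩, hwz⟩ := hu
  refine ⟨w, hw, ?_⟩
  rwa [show w + (u : E) = z by rw [← L.subtypeL_apply, ← hwz, hT]; abel]

theorem exists_le_infTranslate_of_posSpan_eq [CompleteSpace E] (hψ : ConvexE ψ)
    (hlsc : LowerSemicontinuous ψ) (hΩ : Convex ℝ Ω) (hΩc : IsClosed Ω) (hzb : zb ∈ Ω)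
    (hψzb : ψ zb ≤ 0) (h0 : infTranslate ψ Ω 0 = 0) {L : Submodule ℝ E}
    (hLc : IsClosed (L : Set E)) (hL : posSpan (domE ψ - Ω) = L) :
    ∃ ζ : E →L[ℝ] ℝ, ∀ u, (ζ u : EReal) ≤ infTranslate ψ Ω u := by
  obtain ⟨ζL, hζL⟩ :=
    ((convexE_infTranslate hψ hΩ).comp_linearMap L.subtype).exists_le_of_eventually_le
      (by simpa using h0) (m := 1) <|
    (eventually_exists_add_le_one hψ hlsc hΩ hΩc hzb hψzb hLc hL).mono
      fun u ⟨w, hw, hle⟩ => (infTranslate_le hw (u : E)).trans hle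
  obtain ⟨ζ, hζ, -⟩ := exists_extension_norm_eq L ζL
  refine ⟨ζ, fun u => ?_⟩
  by_cases hu : u ∈ L
  · simpa [hζ ⟨u, hu⟩] using hζL ⟨u, hu⟩
  · have : infTranslate ψ Ω u = ⊤ := by
      by_contra h
      have := subset_posSpan _ (mem_sub_of_infTranslate_ne_top h)
      rw [hL] at this
      exact hu this
    simp [this]

end AttouchBrezis

theorem exists_subgradient_normal_of_posSpan_eq {E : Type*} [NormedAddCommGroup E]
    [NormedSpace ℝ E] [CompleteSpace E] {f : E → EReal} (hf : ConvexE f)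
    (hlsc : LowerSemicontinuous f) {Ω : Set E} (hΩ : Convex ℝ Ω) (hΩc : IsClosed Ω) {zb : E}
    (hzb : zb ∈ Ω) {r : ℝ} (hfzb : f zb = r) {ℓ : E →L[ℝ] ℝ}
    (hℓ : ∀ z ∈ Ω, (ℓ (z - zb) : EReal) ≤ f z - f zb) {L : Submodule ℝ E}
    (hLc : IsClosed (L : Set E)) (hL : posSpan (domE f - Ω) = L) :
    ∃ ζ : E →L[ℝ] ℝ, (∀ z, (ζ (z - zb) : EReal) ≤ f z - f zb) ∧
      ∀ w ∈ Ω, ℓ (w - zb) ≤ ζ (w - zb) := by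
  obtain ⟨ζ, hζ⟩ := exists_le_infTranslate_of_posSpan_eq (convexE_tilt hf) hlsc.tilt hΩ hΩc hzb
    (tilt_self hfzb).le (infTranslate_tilt_zero hzb hfzb hℓ) hLc (by rwa [domE_tilt])
  exact exists_subgradient_normal_of_le_infTranslate hzb hfzb hζ

namespace IsBanach

variable {X : Type*} [AddCommGroup X] [Module ℝ X] [TopologicalSpace X]

theorem norm_sub_comm (h : IsBanach X) (x y : X) : h.choose (x - y) = h.choose (y - x) := by
  rw [← neg_sub, ← neg_one_smul ℝ, h.choose_spec.2.2.1, abs_neg, abs_one, one_mul]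

/-- The norm witnessing `IsBanach X`; its metric topology is replaced by the given one, to which
it is only propositionally equal. -/
noncomputable abbrev normedAddCommGroup (h : IsBanach X) : NormedAddCommGroup X :=
  have hn := h.choose_spec
  letI m : MetricSpace X :=
    { dist := fun x y => h.choose (x - y)
      dist_self := fun x => by simp [hn.1]
      dist_comm := h.norm_sub_comm
      dist_triangle := fun x y z => by simpa using hn.2.1 (x - y) (y - z)
      eq_of_dist_eq_zero := fun hxy => sub_eq_zero.1 ((hn.1 _).1 hxy) }
  { norm := h.choose
    toMetricSpace := m.replaceTopology <| by
      ext s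
      exact (hn.2.2.2.1 s).trans Metric.isOpen_iff.symm
    dist_eq := fun x y => by
      change h.choose (x - y) = h.choose (-x + y)
      rw [neg_add_eq_sub, h.norm_sub_comm] }

noncomputable abbrev normedSpace (h : IsBanach X) :
    @NormedSpace ℝ X _ h.normedAddCommGroup.toSeminormedAddCommGroup :=
  let := h.normedAddCommGroup
  { (‹Module ℝ X› : Module ℝ X) with
    norm_smul_le := fun a x => by rw [Real.norm_eq_abs]; exact (h.choose_spec.2.2.1 a x).le }

theorem completeSpace (h : IsBanach X) : @CompleteSpace X h.normedAddCommGroup.toUniformSpace :=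
  let := h.normedAddCommGroup
  Metric.complete_of_cauchySeq_tendsto fun u hu =>
    h.choose_spec.2.2.2.2 u fun ε hε => Metric.cauchySeq_iff.1 hu ε hε

end IsBanach

section ValueFunction

variable {X Y : Type*} [AddCommGroup X] [Module ℝ X] [TopologicalSpace X]
  [AddCommGroup Y] [Module ℝ Y] [TopologicalSpace Y] {φ : X × Y → EReal} {F : X → Set Y}
  {μ : X → EReal} {xb : X} {yb : Y}

theorem add_mem_subdiffE_of_mem_coderivF (hμ : ∀ x, μ x = ⨅ y ∈ F x, φ (x, y))
    (hμb : μ xb = φ (xb, yb)) {pq : (X →L[ℝ] ℝ) × (Y →L[ℝ] ℝ)} (hpq : pq ∈ subdiff2E φ (xb, yb))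
    {q : X →L[ℝ] ℝ} (hq : q ∈ coderivF F xb yb pq.2) : pq.1 + q ∈ subdiffE μ xb := by
  obtain ⟨r, hr⟩ := EReal.exists_eq_coe_of_nonneg_sub_self (by simpa using hpq (xb, yb))
  intro x
  rw [hμb, hr, EReal.le_sub_iff_add_le (.inl (EReal.coe_ne_bot r)) (.inl (EReal.coe_ne_top r)),
    hμ x]
  refine le_iInf₂ fun y hy => ?_
  have := hpq (x, y)
  rw [hr, EReal.le_sub_iff_add_le (.inl (EReal.coe_ne_bot r)) (.inl (EReal.coe_ne_top r))]
    at this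
  refine le_trans ?_ this
  rw [← EReal.coe_add, ← EReal.coe_add, EReal.coe_le_coe_iff, add_apply]
  linarith [hq x y hy]

end ValueFunction

theorem subdifferential_optimal_value_function_general
    {X Y : Type*} [AddCommGroup X] [Module ℝ X] [TopologicalSpace X]
    [IsTopologicalAddGroup X] [ContinuousSMul ℝ X]
    [AddCommGroup Y] [Module ℝ Y] [TopologicalSpace Y]
    [IsTopologicalAddGroup Y] [ContinuousSMul ℝ Y]
    (φ : X × Y → EReal) (hφ : ConvexE φ)
    (F : X → Set Y) (hF : Convex ℝ (gphF F))
    (μ : X → EReal) (hμ : ∀ x, μ x = ⨅ y ∈ F x, φ (x, y))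
    (hcase :
      (∃ zb ∈ gphF F, φ zb ≠ ⊤ ∧ ContinuousAt φ zb) ∨
      (IsBanach X ∧ IsBanach Y ∧ LowerSemicontinuous φ ∧ IsClosed (gphF F) ∧
        ∃ L : Submodule ℝ (X × Y), IsClosed (L : Set (X × Y)) ∧
          posSpan (domE φ - gphF F) = (L : Set (X × Y)))) :
    ∀ (xb : X) (yb : Y), yb ∈ F xb → μ xb = φ (xb, yb) →
      subdiffE μ xb
        = ⋃ pq ∈ subdiff2E φ (xb, yb),
            (fun r => pq.1 + r) '' coderivF F xb yb pq.2 := by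
  intro xb yb hyb hμb
  refine Subset.antisymm (fun p hp => ?_) (iUnion₂_subset fun pq hpq => image_subset_iff.2
    fun q hq => add_mem_subdiffE_of_mem_coderivF hμ hμb hpq hq)
  obtain ⟨r, hr⟩ := EReal.exists_eq_coe_of_nonneg_sub_self (by simpa using hp xb)
  have hℓ : ∀ z ∈ gphF F, ((p.comp (.fst ℝ X Y)) (z - (xb, yb)) : EReal) ≤ φ z - φ (xb, yb) :=
    fun z hz => (hp z.1).trans <| EReal.sub_le_sub (hμ z.1 ▸ iInf₂_le z.2 hz) hμb.ge
  obtain ⟨ζ, hζ, hζΩ⟩ : ∃ ζ : X × Y →L[ℝ] ℝ,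
      (∀ z, (ζ (z - (xb, yb)) : EReal) ≤ φ z - φ (xb, yb)) ∧
        ∀ w ∈ gphF F, p.comp (.fst ℝ X Y) (w - (xb, yb)) ≤ ζ (w - (xb, yb)) := by
    rcases hcase with ⟨z₀, hz₀, hφz₀, hcont⟩ | ⟨hX, hY, hlsc, hcl, L, hLc, hL⟩
    · exact exists_subgradient_normal_of_continuousAt hφ hF hyb (hμb ▸ hr) hℓ hz₀ hφz₀ hcont
    · let := hX.normedAddCommGroup; let := hX.normedSpace; have := hX.completeSpace
      let := hY.normedAddCommGroup; let := hY.normedSpace; have := hY.completeSpace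
      exact exists_subgradient_normal_of_posSpan_eq hφ hlsc hF hcl hyb (hμb ▸ hr) hℓ hLc hL
  refine mem_iUnion₂.2 ⟨(ζ.comp (.inl ℝ X Y), ζ.comp (.inr ℝ X Y)), fun z => ?_,
    p - ζ.comp (.inl ℝ X Y), fun x y hy => ?_, add_sub_cancel _ _⟩
  · have := hζ z
    rwa [← ζ.comp_inl_add_comp_inr] at this
  · have := hζΩ (x, y) hy
    rw [← ζ.comp_inl_add_comp_inr] at this
    simp only [sub_apply, ContinuousLinearMap.comp_apply,
      ContinuousLinearMap.coe_fst', Prod.fst_sub, Prod.snd_sub] at this ⊢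
    linarith

/-- precise subdifferential calculation for the optimal value function
`μ(x) = inf{φ(x,y) : y ∈ F(x)}`: for `ȳ ∈ M(x̄)`,
`∂μ(x̄) = ⋃_{(x*,y*) ∈ ∂φ(x̄,ȳ)} [x* + D*F(x̄,ȳ)(y*)]`, under a continuity or
Banach/closedness qualification condition. -/
theorem subdifferential_optimal_value_function
    {X Y : Type*} [AddCommGroup X] [Module ℝ X] [TopologicalSpace X]
    [IsTopologicalAddGroup X] [ContinuousSMul ℝ X] [LocallyConvexSpace ℝ X] [T2Space X]
    [AddCommGroup Y] [Module ℝ Y] [TopologicalSpace Y]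
    [IsTopologicalAddGroup Y] [ContinuousSMul ℝ Y] [LocallyConvexSpace ℝ Y] [T2Space Y]
    (φ : X × Y → EReal) (hφ : ConvexE φ)
    (F : X → Set Y) (hF : Convex ℝ (gphF F))
    (μ : X → EReal) (hμ : ∀ x, μ x = ⨅ y ∈ F x, φ (x, y))
    (hμbot : ∀ x, μ x > ⊥)
    (hcase :
      (∃ zb ∈ gphF F, φ zb ≠ ⊤ ∧ ContinuousAt φ zb) ∨
      (IsBanach X ∧ IsBanach Y ∧ LowerSemicontinuous φ ∧ IsClosed (gphF F) ∧
        ∃ L : Submodule ℝ (X × Y), IsClosed (L : Set (X × Y)) ∧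
          posSpan (domE φ - gphF F) = (L : Set (X × Y)))) :
    ∀ (xb : X) (yb : Y), yb ∈ F xb → μ xb = φ (xb, yb) →
      subdiffE μ xb
        = ⋃ pq ∈ subdiff2E φ (xb, yb),
            (fun r => pq.1 + r) '' coderivF F xb yb pq.2 :=
  subdifferential_optimal_value_function_general φ hφ F hF μ hμ hcase
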